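/- arXiv:1002.2501 — 5 statements merged into one kernel-verified Lean document; each statement's English description precedes it below -/
import Mathlib

section
/- Let N ≥ 3 be an integer, x₀ ∈ ℝ^N, R₀ > 0 and G ≥ 0. Then there exist r₀ > R₀ and α > 0, depending only on N, R₀ and G, with the following property: for every r ≥ r₀, if u is continuous on the closed annulus {x ∈ ℝ^N : R₀ ≤ ‖x − x₀‖ ≤ r}, harmonic on the open annulus {x : R₀ < ‖x − x₀‖ < r}, satisfies u ≥ 0 on the closed annulus, u ≤ G on the inner sphere {x : ‖x − x₀‖ = R₀}, and u = 0 on the outer sphere {x : ‖x − x₀‖ = r}, then at every point x with ‖x − x₀‖ = r at which u is differentiable along the closed annulus, every such derivative p ∈ ℝ^N satisfies ‖p‖² ≤ α r^{2−2N}. -/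
open Metric Set

/-- The Laplacian of `f : ℝ^N → ℝ` at `x`, as the sum of the second partial
derivatives along the coordinate directions. -/
noncomputable def lapl {N : ℕ} (f : EuclideanSpace ℝ (Fin N) → ℝ)
    (x : EuclideanSpace ℝ (Fin N)) : ℝ :=
  ∑ i : Fin N,
    fderiv ℝ (fun y => fderiv ℝ f y (EuclideanSpace.single i 1)) x (EuclideanSpace.single i 1)

/-- `f` is harmonic on `Ω`: it is `C²` there and its Laplacian vanishes on `Ω`. -/
def IsHarmonicOn {N : ℕ} (f : EuclideanSpace ℝ (Fin N) → ℝ)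
    (Ω : Set (EuclideanSpace ℝ (Fin N))) : Prop :=
  ContDiffOn ℝ 2 f Ω ∧ ∀ x ∈ Ω, lapl f x = 0

/-!
With `β = (2 - N) / 2`, the barrier `Φ y = c ((‖y - x₀‖²)^β - (r²)^β)` is harmonic away from `x₀`,
vanishes on the outer sphere and, once `r ≥ 2 R₀` and `c = (2G + 1) / (R₀²)^β`, is at least `G`
on the inner sphere. The weak maximum principle, applied to the strictly subharmonic functions
`u - Φ + ε ‖y - x₀‖²`, gives `0 ≤ u ≤ Φ` on the closed annulus, while `u = Φ = 0` at a point `x` of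
the outer sphere. So in every inward direction the derivative of `u` at `x` lies between `0` and
that of `Φ`, which forces the gradient to be a nonpositive multiple of the normal `x - x₀`, of
length at most `‖∇Φ x‖ = c (N - 2) r^(1 - N)`.
-/

open Filter Topology RealInnerProductSpace

section SecondDerivative

variable {E F : Type*} [NormedAddCommGroup E] [NormedSpace ℝ E] [NormedAddCommGroup F]
  [NormedSpace ℝ F] {f : E → F} {x : E}

theorem ContDiffAt.eventually_differentiableAt (hf : ContDiffAt ℝ 2 f x) :
    ∀ᶠ y in 𝓝 x, DifferentiableAt ℝ f y :=
  (hf.eventually (by simp)).mono fun _ hy => hy.differentiableAt (by norm_num)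

theorem ContDiffAt.differentiableAt_fderiv_apply (hf : ContDiffAt ℝ 2 f x) (e : E) :
    DifferentiableAt ℝ (fun y => fderiv ℝ f y e) x :=
  ((hf.fderiv_right (m := 1) (by norm_num)).differentiableAt (by norm_num)).clm_apply
    (differentiableAt_const e)

theorem IsLocalMax.deriv_deriv_nonpos {g : ℝ → ℝ} {t : ℝ} (h : IsLocalMax g t)
    (hg : ContinuousAt g t) : deriv (deriv g) t ≤ 0 := by
  by_contra! hpos
  have hmin : IsLocalMin g t := isLocalMin_of_deriv_deriv_pos hpos h.deriv_eq_zero hg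
  have hconst : g =ᶠ[𝓝 t] fun _ => g t := by
    filter_upwards [h, hmin] with s hmax hmin using le_antisymm hmax hmin
  have hderiv : deriv g =ᶠ[𝓝 t] fun _ => 0 := by
    filter_upwards [hconst.eventuallyEq_nhds] with s hs
    rw [hs.deriv_eq, deriv_const]
  rw [hderiv.deriv_eq, deriv_const] at hpos
  exact hpos.false

theorem IsLocalMax.fderiv_fderiv_apply_nonpos {f : E → ℝ} (h : IsLocalMax f x)
    (hf : ContDiffAt ℝ 2 f x) (e : E) : fderiv ℝ (fun y => fderiv ℝ f y e) x e ≤ 0 := by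
  set γ : ℝ → E := fun t => x + t • e
  have hγ (t : ℝ) : HasDerivAt γ e t := by
    simpa [γ] using ((hasDerivAt_id t).smul_const e).const_add x
  have hγ0 : γ 0 = x := by simp [γ]
  have hderiv : deriv (f ∘ γ) =ᶠ[𝓝 0] fun t => fderiv ℝ f (γ t) e := by
    filter_upwards [(hγ 0).continuousAt.tendsto (hγ0 ▸ hf.eventually_differentiableAt)]
      with t ht
    exact (ht.hasFDerivAt.comp_hasDerivAt t (hγ t)).deriv
  calc fderiv ℝ (fun y => fderiv ℝ f y e) x e = deriv (deriv (f ∘ γ)) 0 := by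
        rw [hderiv.deriv_eq, ← hγ0]
        exact (((hγ0 ▸ hf.differentiableAt_fderiv_apply e).hasFDerivAt.comp_hasDerivAt 0
          (hγ 0)).deriv).symm
    _ ≤ 0 :=
        ((hγ0 ▸ h).comp_continuous (hγ 0).continuousAt).deriv_deriv_nonpos
          ((hγ0 ▸ hf.continuousAt).comp (hγ 0).continuousAt)

end SecondDerivative

section Laplacian

variable {N : ℕ} {f g : EuclideanSpace ℝ (Fin N) → ℝ} {x : EuclideanSpace ℝ (Fin N)}

theorem lapl_add (hf : ContDiffAt ℝ 2 f x) (hg : ContDiffAt ℝ 2 g x) :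
    lapl (f + g) x = lapl f x + lapl g x := by
  simp only [lapl, ← Finset.sum_add_distrib]
  refine Finset.sum_congr rfl fun i _ => ?_
  set e := EuclideanSpace.single i (1 : ℝ)
  have hsum : (fun y => fderiv ℝ (f + g) y e) =ᶠ[𝓝 x]
      (fun y => fderiv ℝ f y e) + fun y => fderiv ℝ g y e := by
    filter_upwards [hf.eventually_differentiableAt, hg.eventually_differentiableAt]
      with y hfy hgy
    rw [fderiv_add hfy hgy]
    rfl
  rw [hsum.fderiv_eq,
    fderiv_add (hf.differentiableAt_fderiv_apply e) (hg.differentiableAt_fderiv_apply e)]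
  rfl

theorem IsLocalMax.lapl_nonpos (h : IsLocalMax f x) (hf : ContDiffAt ℝ 2 f x) :
    lapl f x ≤ 0 :=
  Finset.sum_nonpos fun _ _ => h.fderiv_fderiv_apply_nonpos hf _

theorem IsCompact.exists_isMaxOn_mem_diff_of_lapl_pos {K U : Set (EuclideanSpace ℝ (Fin N))}
    (hK : IsCompact K) (hKne : K.Nonempty) (hU : IsOpen U) (hUK : U ⊆ K)
    (hfK : ContinuousOn f K) (hfU : ∀ z ∈ U, ContDiffAt ℝ 2 f z ∧ 0 < lapl f z) :
    ∃ z ∈ K \ U, IsMaxOn f K z := by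
  obtain ⟨z, hzK, hmax⟩ := hK.exists_isMaxOn hKne hfK
  refine ⟨z, ⟨hzK, fun hzU => ?_⟩, hmax⟩
  have hloc : IsLocalMax f z := (hmax.on_subset hUK).isLocalMax (hU.mem_nhds hzU)
  exact (hloc.lapl_nonpos (hfU z hzU).1).not_gt (hfU z hzU).2

end Laplacian

section RadialBarrier

variable {E : Type*} [NormedAddCommGroup E] [InnerProductSpace ℝ E]

noncomputable def radialBarrier (x₀ : E) (a b d β : ℝ) (y : E) : ℝ :=
  a * (‖y - x₀‖ ^ 2) ^ β + b * ‖y - x₀‖ ^ 2 + d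

variable {x₀ x : E} {a b d β : ℝ}

theorem hasFDerivAt_normSq_sub (x₀ x : E) :
    HasFDerivAt (fun y => ‖y - x₀‖ ^ 2) ((2 : ℝ) • innerSL ℝ (x - x₀)) x :=
  ((hasFDerivAt_id x).sub_const x₀).norm_sq.congr_fderiv (by ext v; simp)

theorem hasFDerivAt_radialBarrier (hx : x ≠ x₀) :
    HasFDerivAt (radialBarrier x₀ a b d β)
      ((2 * (a * β * (‖x - x₀‖ ^ 2) ^ (β - 1) + b)) • innerSL ℝ (x - x₀)) x := by
  have hq : ‖x - x₀‖ ^ 2 ≠ 0 := by simpa [sub_eq_zero] using hx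
  have hpow := (hasFDerivAt_normSq_sub x₀ x).rpow_const (p := β) (Or.inl hq)
  refine (((hpow.const_mul a).add ((hasFDerivAt_normSq_sub x₀ x).const_mul b)).add_const
    d).congr_fderiv ?_
  ext v
  simp only [map_sub, add_apply, smul_apply, sub_apply, coe_innerSL_apply, smul_eq_mul]
  ring

theorem contDiffAt_radialBarrier {n : WithTop ℕ∞} (hx : x ≠ x₀) :
    ContDiffAt ℝ n (radialBarrier x₀ a b d β) x := by
  have hq : ContDiff ℝ n fun y : E => ‖y - x₀‖ ^ 2 :=
    (contDiff_norm_sq ℝ).comp (contDiff_id.sub contDiff_const)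
  have hpow : ContDiffAt ℝ n (fun y : E => (‖y - x₀‖ ^ 2) ^ β) x :=
    hq.contDiffAt.rpow_const_of_ne (by simpa [sub_eq_zero] using hx)
  exact ((contDiffAt_const.mul hpow).add (contDiffAt_const.mul hq.contDiffAt)).add
    contDiffAt_const

theorem fderiv_fderiv_radialBarrier_apply (hx : x ≠ x₀) (e : E) :
    fderiv ℝ (fun y => fderiv ℝ (radialBarrier x₀ a b d β) y e) x e =
      2 * (a * β * (‖x - x₀‖ ^ 2) ^ (β - 1) + b) * ‖e‖ ^ 2 +
        4 * a * β * (β - 1) * (‖x - x₀‖ ^ 2) ^ (β - 2) * ⟪x - x₀, e⟫ ^ 2 := by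
  have hq : ‖x - x₀‖ ^ 2 ≠ 0 := by simpa [sub_eq_zero] using hx
  have hpartial : (fun y => fderiv ℝ (radialBarrier x₀ a b d β) y e) =ᶠ[𝓝 x]
      fun y => 2 * (a * β * (‖y - x₀‖ ^ 2) ^ (β - 1) + b) * ⟪y - x₀, e⟫ := by
    filter_upwards [isOpen_ne.mem_nhds hx] with y hy
    simp [(hasFDerivAt_radialBarrier hy).fderiv, inner_sub_left]
  have hpow := (hasFDerivAt_normSq_sub x₀ x).rpow_const (p := β - 1) (Or.inl hq)
  have hinner : HasFDerivAt (fun y => ⟪y - x₀, e⟫) _ x :=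
    ((hasFDerivAt_id x).sub_const x₀).inner ℝ (hasFDerivAt_const e x)
  have H : HasFDerivAt (fun y => 2 * (a * β * (‖y - x₀‖ ^ 2) ^ (β - 1) + b) * ⟪y - x₀, e⟫) _ x :=
    (((hpow.const_mul (a * β)).add_const b).const_mul 2).mul hinner
  rw [hpartial.fderiv_eq, H.fderiv]
  simp only [id_eq, inner_sub_left, show β - 1 - 1 = β - 2 by ring, map_sub, add_apply,
    smul_apply, ContinuousLinearMap.comp_apply, ContinuousLinearMap.prod_apply,
    ContinuousLinearMap.id_apply, zero_apply, fderivInnerCLM_apply, inner_zero_right,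
    real_inner_self_eq_norm_sq, zero_add, smul_eq_mul, sub_apply, coe_innerSL_apply]
  ring

end RadialBarrier

theorem lapl_radialBarrier {N : ℕ} {x₀ x : EuclideanSpace ℝ (Fin N)} {a b d β : ℝ}
    (hx : x ≠ x₀) :
    lapl (radialBarrier x₀ a b d β) x =
      2 * a * β * (N + 2 * β - 2) * (‖x - x₀‖ ^ 2) ^ (β - 1) + 2 * N * b := by
  have hq : 0 < ‖x - x₀‖ ^ 2 := by
    have := sub_ne_zero.2 hx
    positivity
  have hparseval : ∑ i, ⟪x - x₀, EuclideanSpace.single i (1 : ℝ)⟫ ^ 2 = ‖x - x₀‖ ^ 2 := by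
    simpa using (EuclideanSpace.basisFun (Fin N) ℝ).sum_sq_inner_left (x - x₀)
  have hpow : (‖x - x₀‖ ^ 2) ^ (β - 2) * ‖x - x₀‖ ^ 2 = (‖x - x₀‖ ^ 2) ^ (β - 1) := by
    rw [← Real.rpow_add_one hq.ne']
    ring_nf
  simp only [lapl, fderiv_fderiv_radialBarrier_apply hx, Finset.sum_add_distrib,
    ← Finset.mul_sum, hparseval, PiLp.norm_single, norm_one, one_pow, mul_one,
    Finset.sum_const, Finset.card_univ, Fintype.card_fin, nsmul_eq_mul]
  rw [mul_assoc _ _ (‖x - x₀‖ ^ 2), hpow]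
  ring

section Annulus

variable {E : Type*} [NormedAddCommGroup E]

def annulus (x₀ : E) (R r : ℝ) : Set E := {x | R < ‖x - x₀‖ ∧ ‖x - x₀‖ < r}

def closedAnnulus (x₀ : E) (R r : ℝ) : Set E := {x | R ≤ ‖x - x₀‖ ∧ ‖x - x₀‖ ≤ r}

variable {x₀ x : E} {R r : ℝ}

theorem isOpen_annulus : IsOpen (annulus x₀ R r) :=
  isOpen_Ioo.preimage (continuous_id.sub continuous_const).norm

theorem isCompact_closedAnnulus [ProperSpace E] : IsCompact (closedAnnulus x₀ R r) :=
  (isCompact_closedBall x₀ r).of_isClosed_subset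
    (isClosed_Icc.preimage (continuous_id.sub continuous_const).norm)
    fun _ hx => mem_closedBall_iff_norm.2 hx.2

theorem annulus_subset_closedAnnulus : annulus x₀ R r ⊆ closedAnnulus x₀ R r :=
  fun _ hx => ⟨hx.1.le, hx.2.le⟩

theorem ne_of_mem_closedAnnulus (hR : 0 < R) (hx : x ∈ closedAnnulus x₀ R r) : x ≠ x₀ := by
  rintro rfl
  simpa [closedAnnulus] using hR.trans_le hx.1

theorem norm_sub_eq_or_eq_of_mem_closedAnnulus_diff
    (hx : x ∈ closedAnnulus x₀ R r \ annulus x₀ R r) : ‖x - x₀‖ = R ∨ ‖x - x₀‖ = r := by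
  obtain ⟨⟨hR, hr⟩, hA⟩ := hx
  by_contra! h
  exact hA ⟨lt_of_le_of_ne hR h.1.symm, lt_of_le_of_ne hr h.2⟩

end Annulus

theorem le_radialBarrier_of_isHarmonicOn {N : ℕ} (hN : 0 < N) {x₀ : EuclideanSpace ℝ (Fin N)}
    {R₀ r G c β : ℝ} (hR₀ : 0 < R₀) (hβ : (N : ℝ) + 2 * β - 2 = 0)
    (hcG : G ≤ c * ((R₀ ^ 2) ^ β - (r ^ 2) ^ β)) {u : EuclideanSpace ℝ (Fin N) → ℝ}
    (hcont : ContinuousOn u (closedAnnulus x₀ R₀ r)) (hharm : IsHarmonicOn u (annulus x₀ R₀ r))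
    (hin : ∀ x, ‖x - x₀‖ = R₀ → u x ≤ G) (hout : ∀ x, ‖x - x₀‖ = r → u x = 0) :
    ∀ y ∈ closedAnnulus x₀ R₀ r, u y ≤ radialBarrier x₀ c 0 (-(c * (r ^ 2) ^ β)) β y := by
  intro y hy
  have hr : 0 < r := hR₀.trans_le (hy.1.trans hy.2)
  refine le_of_forall_pos_le_add fun ε hε => ?_
  set η := ε / r ^ 2
  have hη : 0 < η := by positivity
  have hηr : η * r ^ 2 = ε := div_mul_cancel₀ ε (by positivity)
  set w := radialBarrier x₀ (-c) η (c * (r ^ 2) ^ β) β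
  have hsubharm : ∀ z ∈ annulus x₀ R₀ r, ContDiffAt ℝ 2 (u + w) z ∧ 0 < lapl (u + w) z := by
    intro z hz
    have hzx₀ := ne_of_mem_closedAnnulus hR₀ (annulus_subset_closedAnnulus hz)
    have hu : ContDiffAt ℝ 2 u z := hharm.1.contDiffAt (isOpen_annulus.mem_nhds hz)
    have hw : ContDiffAt ℝ 2 w z := contDiffAt_radialBarrier hzx₀
    refine ⟨hu.add hw, ?_⟩
    rw [lapl_add hu hw, hharm.2 z hz, lapl_radialBarrier hzx₀, hβ]
    simp only [mul_zero, zero_mul, zero_add]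
    have : (0 : ℝ) < N := by exact_mod_cast hN
    positivity
  have hcontf : ContinuousOn (u + w) (closedAnnulus x₀ R₀ r) :=
    hcont.add fun z hz =>
      (contDiffAt_radialBarrier (n := 0) (ne_of_mem_closedAnnulus hR₀ hz)).continuousAt
        |>.continuousWithinAt
  obtain ⟨z, hz, hmax⟩ := isCompact_closedAnnulus.exists_isMaxOn_mem_diff_of_lapl_pos ⟨y, hy⟩
    isOpen_annulus annulus_subset_closedAnnulus hcontf hsubharm
  have hzε : u z + w z ≤ ε := by
    rcases norm_sub_eq_or_eq_of_mem_closedAnnulus_diff hz with hzR | hzr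
    · have hRr : R₀ ^ 2 ≤ r ^ 2 := by nlinarith [hz.1.1, hz.1.2]
      have := hin z hzR
      simp only [w, radialBarrier, hzR]
      nlinarith
    · simp only [w, radialBarrier, hzr, hout z hzr]
      linarith
  have hy' : u y + w y ≤ ε := (hmax hy).trans hzε
  have : 0 ≤ η * ‖y - x₀‖ ^ 2 := by positivity
  simp only [w, radialBarrier] at hy' ⊢
  linarith

section InnerProductSpace

variable {E : Type*} [NormedAddCommGroup E] [InnerProductSpace ℝ E]

theorem exists_nonpos_smul_eq_of_inner_nonneg {ν w : E} (hν : ν ≠ 0)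
    (h : ∀ v, ⟪ν, v⟫ < 0 → 0 ≤ ⟪w, v⟫) : ∃ s ≤ (0 : ℝ), w = s • ν := by
  have hνν : 0 < ⟪ν, ν⟫ := real_inner_self_pos.2 hν
  have hwν : ⟪w, ν⟫ ≤ 0 := by
    simpa using h (-ν) (by simpa using hνν)
  set s := ⟪w, ν⟫ / ⟪ν, ν⟫
  set τ := w - s • ν
  have hντ : ⟪ν, τ⟫ = 0 := by
    simp only [τ, s, inner_sub_right, real_inner_smul_right, real_inner_comm ν w]
    field_simp
    ring
  have hwτ : ⟪w, τ⟫ = ⟪τ, τ⟫ := by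
    rw [show w = τ + s • ν by simp [τ], inner_add_left, real_inner_smul_left, real_inner_comm,
      hντ, mul_zero, add_zero]
  -- if `τ ≠ 0`, tilting `-ν` along `-τ` makes `⟪w, v⟫` negative
  have hτ : τ = 0 := by
    by_contra hτ
    have hττ : 0 < ⟪τ, τ⟫ := real_inner_self_pos.2 hτ
    set k := (1 - ⟪w, ν⟫) / ⟪τ, τ⟫
    have hv := h (-ν - k • τ) (by
      simp only [inner_sub_right, inner_neg_right, real_inner_smul_right, hντ]
      linarith)
    simp only [inner_sub_right, inner_neg_right, real_inner_smul_right, hwτ, k,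
      div_mul_cancel₀ _ hττ.ne'] at hv
    linarith
  exact ⟨s, div_nonpos_of_nonpos_of_nonneg hwν hνν.le, sub_eq_zero.1 hτ⟩

theorem norm_le_of_inner_nonneg_of_inner_neg_le {ν p : E} {μ : ℝ} (hν : ν ≠ 0)
    (hlow : ∀ v, ⟪ν, v⟫ < 0 → 0 ≤ ⟪p, v⟫) (hup : -⟪p, ν⟫ ≤ μ * ‖ν‖ ^ 2) :
    ‖p‖ ≤ μ * ‖ν‖ := by
  obtain ⟨s, hs, rfl⟩ := exists_nonpos_smul_eq_of_inner_nonneg hν hlow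
  have hνpos : 0 < ‖ν‖ := norm_pos_iff.2 hν
  rw [real_inner_smul_left, real_inner_self_eq_norm_sq] at hup
  rw [norm_smul, Real.norm_of_nonpos hs]
  nlinarith

variable {x₀ x v : E} {R r : ℝ}

theorem mem_posTangentConeAt_closedAnnulus (hRr : R < r) (hx : ‖x - x₀‖ = r)
    (hv : ⟪x - x₀, v⟫ < 0) : v ∈ posTangentConeAt (closedAnnulus x₀ R r) x := by
  have hr : 0 ≤ r := hx ▸ norm_nonneg _
  have hinner : ∀ᶠ t in 𝓝 (0 : ℝ), R < ‖x + t • v - x₀‖ := by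
    have : Tendsto (fun t : ℝ => ‖x + t • v - x₀‖) (𝓝 0) (𝓝 r) := by
      simpa [hx] using ((by fun_prop : Continuous fun t : ℝ => ‖x + t • v - x₀‖).tendsto 0)
    exact this.eventually (lt_mem_nhds hRr)
  have hquad : ∀ᶠ t in 𝓝 (0 : ℝ), 2 * ⟪x - x₀, v⟫ + t * ‖v‖ ^ 2 < 0 := by
    have : Tendsto (fun t : ℝ => 2 * ⟪x - x₀, v⟫ + t * ‖v‖ ^ 2) (𝓝 0)
        (𝓝 (2 * ⟪x - x₀, v⟫)) := by
      simpa using ((by fun_prop : Continuous fun t : ℝ => 2 * ⟪x - x₀, v⟫ + t * ‖v‖ ^ 2).tendsto 0)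
    exact this.eventually (gt_mem_nhds (by linarith))
  refine mem_posTangentConeAt_of_frequently_mem (Eventually.frequently ?_)
  filter_upwards [nhdsWithin_le_nhds hinner, nhdsWithin_le_nhds hquad, self_mem_nhdsWithin]
    with t hRt hqt (ht : 0 < t)
  refine ⟨hRt.le, (pow_le_pow_iff_left₀ (norm_nonneg _) hr two_ne_zero).1 ?_⟩
  have hexp : ‖x + t • v - x₀‖ ^ 2 = r ^ 2 + t * (2 * ⟪x - x₀, v⟫ + t * ‖v‖ ^ 2) := by
    rw [show x + t • v - x₀ = (x - x₀) + t • v by abel, norm_add_sq_real, hx,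
      real_inner_smul_right, norm_smul, Real.norm_eq_abs, mul_pow, sq_abs]
    ring
  nlinarith

theorem norm_le_of_hasGradientWithinAt_closedAnnulus [CompleteSpace E] {p : E} {k : ℝ}
    {u Φ : E → ℝ} (hR : 0 ≤ R) (hRr : R < r) (hx : ‖x - x₀‖ = r)
    (hp : HasGradientWithinAt u p (closedAnnulus x₀ R r) x)
    (hΦ : HasFDerivAt Φ (k • innerSL ℝ (x - x₀)) x)
    (hu : ∀ y ∈ closedAnnulus x₀ R r, 0 ≤ u y) (huΦ : ∀ y ∈ closedAnnulus x₀ R r, u y ≤ Φ y)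
    (hux : u x = 0) (hΦx : Φ x = 0) : ‖p‖ ≤ -k * r := by
  have hν : x - x₀ ≠ 0 := norm_pos_iff.1 (hx ▸ hR.trans_lt hRr)
  have hu' := hp.hasFDerivWithinAt
  have hmin_u : IsLocalMinOn u (closedAnnulus x₀ R r) x :=
    IsMinOn.localize fun y hy => hux ▸ hu y hy
  have hmin_Φu : IsLocalMinOn (Φ - u) (closedAnnulus x₀ R r) x :=
    IsMinOn.localize fun y hy => by simpa [hux, hΦx] using huΦ y hy
  have hlow : ∀ v, ⟪x - x₀, v⟫ < 0 → 0 ≤ ⟪p, v⟫ := fun v hv =>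
    hmin_u.hasFDerivWithinAt_nonneg hu' (mem_posTangentConeAt_closedAnnulus hRr hx hv)
  have hup : -⟪p, x - x₀⟫ ≤ -k * ‖x - x₀‖ ^ 2 := by
    have := hmin_Φu.hasFDerivWithinAt_nonneg (hΦ.hasFDerivWithinAt.sub hu')
      (mem_posTangentConeAt_closedAnnulus hRr hx (v := -(x - x₀))
        (by simpa [-neg_sub] using real_inner_self_pos.2 hν))
    simp only [sub_apply, smul_apply, coe_innerSL_apply, smul_eq_mul, sub_nonneg,
      InnerProductSpace.toDual_apply_apply, inner_neg_right, real_inner_self_eq_norm_sq] at this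
    linarith
  simpa [hx] using norm_le_of_inner_nonneg_of_inner_neg_le hν hlow hup

end InnerProductSpace

theorem rpow_sq_le_half_of_two_mul_le {R r β : ℝ} (hR : 0 < R) (hr : 2 * R ≤ r)
    (hβ : β ≤ -1 / 2) : (r ^ 2) ^ β ≤ (R ^ 2) ^ β / 2 := by
  have hfour : (4 : ℝ) ^ β ≤ 1 / 2 := calc
    (4 : ℝ) ^ β ≤ 4 ^ (-1 / 2 : ℝ) := Real.rpow_le_rpow_of_exponent_le (by norm_num) hβ
    _ = 1 / 2 := by
      rw [neg_div, Real.rpow_neg (by norm_num), ← Real.sqrt_eq_rpow,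
        show (4 : ℝ) = 2 ^ 2 by norm_num, Real.sqrt_sq (by norm_num), one_div]
  calc (r ^ 2) ^ β ≤ ((2 * R) ^ 2) ^ β :=
        Real.rpow_le_rpow_of_nonpos (by positivity) (by nlinarith) (by linarith)
    _ = 4 ^ β * (R ^ 2) ^ β := by
        rw [mul_pow, Real.mul_rpow (by norm_num) (by positivity)]
        norm_num
    _ ≤ 1 / 2 * (R ^ 2) ^ β := by gcongr
    _ = (R ^ 2) ^ β / 2 := by ring

theorem sq_rpow_sq_mul_eq_zpow {r : ℝ} (hr : 0 < r) (N : ℕ) :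
    ((r ^ 2) ^ ((2 - N : ℝ) / 2 - 1) * r) ^ 2 = r ^ ((2 : ℤ) - 2 * N) := by
  have hpow : (r ^ 2) ^ ((2 - N : ℝ) / 2 - 1) = (r ^ N)⁻¹ := by
    rw [← Real.rpow_natCast_mul hr.le, Nat.cast_ofNat,
      show (2 : ℝ) * ((2 - N) / 2 - 1) = -N by ring, Real.rpow_neg hr.le, Real.rpow_natCast]
  rw [hpow, zpow_sub₀ hr.ne', zpow_mul]
  simp only [zpow_ofNat, zpow_natCast]
  field_simp
  ring

theorem stmt0 (N : ℕ) (hN : 3 ≤ N) (x₀ : EuclideanSpace ℝ (Fin N))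
    (R₀ G : ℝ) (hR₀ : 0 < R₀) (hG : 0 ≤ G) :
    ∃ r₀ > R₀, ∃ α > 0, ∀ r, r₀ ≤ r →
      ∀ u : EuclideanSpace ℝ (Fin N) → ℝ,
        ContinuousOn u {x | R₀ ≤ ‖x - x₀‖ ∧ ‖x - x₀‖ ≤ r} →
        IsHarmonicOn u {x | R₀ < ‖x - x₀‖ ∧ ‖x - x₀‖ < r} →
        (∀ x, R₀ ≤ ‖x - x₀‖ → ‖x - x₀‖ ≤ r → 0 ≤ u x) →
        (∀ x, ‖x - x₀‖ = R₀ → u x ≤ G) →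
        (∀ x, ‖x - x₀‖ = r → u x = 0) →
        ∀ x, ‖x - x₀‖ = r →
          ∀ p : EuclideanSpace ℝ (Fin N),
            HasGradientWithinAt u p {x | R₀ ≤ ‖x - x₀‖ ∧ ‖x - x₀‖ ≤ r} x →
            ‖p‖ ^ 2 ≤ α * r ^ ((2 : ℤ) - 2 * (N : ℤ)) := by
  have hN' : (3 : ℝ) ≤ N := by exact_mod_cast hN
  set β : ℝ := (2 - N) / 2
  have hβ : (N : ℝ) + 2 * β - 2 = 0 := by ring
  set c := (2 * G + 1) / (R₀ ^ 2) ^ β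
  have hc : c * (R₀ ^ 2) ^ β = 2 * G + 1 := div_mul_cancel₀ _ (by positivity)
  have hcpos : 0 < c := by positivity
  have hN2 : (0 : ℝ) < N - 2 := by linarith
  refine ⟨2 * R₀, by linarith, (c * (N - 2)) ^ 2, by positivity, ?_⟩
  intro r hr u hcont hharm hu hin hout x hx p hp
  have hRr : R₀ < r := by linarith
  have hcG : G ≤ c * ((R₀ ^ 2) ^ β - (r ^ 2) ^ β) := by
    have := mul_le_mul_of_nonneg_left
      (rpow_sq_le_half_of_two_mul_le hR₀ hr (β := β) (by linarith)) hcpos.le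
    linarith
  have hx₀ : x ≠ x₀ := ne_of_mem_closedAnnulus hR₀ (r := r) ⟨hx ▸ hRr.le, hx.le⟩
  have hgrad := norm_le_of_hasGradientWithinAt_closedAnnulus hR₀.le hRr hx hp
    (hasFDerivAt_radialBarrier hx₀) (fun y hy => hu y hy.1 hy.2)
    (le_radialBarrier_of_isHarmonicOn (by omega) hR₀ hβ hcG hcont hharm hin hout)
    (hout x hx) (by simp [radialBarrier, hx])
  rw [hx, show -(2 * (c * β * (r ^ 2) ^ (β - 1) + 0)) * r
    = c * (N - 2) * ((r ^ 2) ^ (β - 1) * r) by ring] at hgrad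
  calc ‖p‖ ^ 2 ≤ (c * (N - 2) * ((r ^ 2) ^ ((2 - N : ℝ) / 2 - 1) * r)) ^ 2 := by
        gcongr
    _ = (c * (N - 2)) ^ 2 * r ^ ((2 : ℤ) - 2 * (N : ℤ)) := by
        rw [mul_pow, sq_rpow_sq_mul_eq_zpow (hR₀.trans hRr)]
end

section
/- Let N ≥ 1, let O ⊆ ℝ^N be open, and let γ > 0, M > 0, β > 0. Let d : O → ℝ be of class C² with ‖∇d(x)‖ = 1, |Δ(d²)(x)| ≤ M and d(x) ≥ γ for every x ∈ O. Define u : O → ℝ by u(x) := β (exp(−M (d(x)² − 4γ²) / (4γ²)) − 1). Then Δu(x) ≥ 0 for every x ∈ O, i.e. u is subharmonic on O. -/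
open Metric Set

/-!
Write the function as `φ ∘ d²` with `φ t = β (exp (-c (t - 4γ²)) - 1)`, `c = M / (4γ²)`.
The chain rule for the Laplacian gives `Δ(φ ∘ g) = φ'(g) Δg + φ''(g) ‖∇g‖²`, and for `g = d²`
we have `‖∇g‖² = 4d²` since `‖∇d‖ = 1`. As `φ'' = -c φ'` with `φ' < 0`, this yields
`Δu = |φ'(d²)| (4c d² - Δ(d²))`, which is nonnegative because `4c d² ≥ 4c γ² = M ≥ Δ(d²)`.
-/

open Filter Topology InnerProductSpace

theorem sum_sq_apply_single_eq_norm_sq {ι : Type*} [Fintype ι] [DecidableEq ι]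
    (ℓ : EuclideanSpace ℝ ι →L[ℝ] ℝ) :
    ∑ i, ℓ (EuclideanSpace.single i 1) ^ 2 = ‖ℓ‖ ^ 2 := by
  set v := (toDual ℝ (EuclideanSpace ℝ ι)).symm ℓ
  have hv : ∀ i, ℓ (EuclideanSpace.single i 1) = v i := fun i => by
    rw [← toDual_symm_apply, real_inner_comm, EuclideanSpace.inner_single_left]
    simp [v]
  simp_rw [hv, ← LinearIsometryEquiv.norm_map (toDual ℝ _).symm ℓ, EuclideanSpace.real_norm_sq_eq]
  rfl

theorem norm_fderiv_eq_norm_gradient {𝕜 F : Type*} [RCLike 𝕜] [NormedAddCommGroup F]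
    [InnerProductSpace 𝕜 F] [CompleteSpace F] (f : F → 𝕜) (x : F) :
    ‖fderiv 𝕜 f x‖ = ‖gradient f x‖ :=
  ((toDual 𝕜 F).symm.norm_map _).symm

theorem lapl_comp {N : ℕ} {f : EuclideanSpace ℝ (Fin N) → ℝ} {x : EuclideanSpace ℝ (Fin N)}
    (hf : ContDiffAt ℝ 2 f x) {φ φ' φ'' : ℝ → ℝ} (hφ : ∀ t, HasDerivAt φ (φ' t) t)
    (hφ' : HasDerivAt φ' (φ'' (f x)) (f x)) :
    lapl (fun y => φ (f y)) x = φ' (f x) * lapl f x + φ'' (f x) * ‖fderiv ℝ f x‖ ^ 2 := by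
  set e : Fin N → EuclideanSpace ℝ (Fin N) := fun i => EuclideanSpace.single i 1
  have hdiff : ∀ᶠ y in 𝓝 x, DifferentiableAt ℝ f y :=
    (hf.eventually (by simp)).mono fun y hy => hy.differentiableAt (by norm_num)
  have hDf : DifferentiableAt ℝ (fderiv ℝ f) x :=
    (hf.fderiv_right (m := 1) (by norm_num)).differentiableAt (by norm_num)
  have hpartial : ∀ i, fderiv ℝ (fun y => fderiv ℝ (fun y => φ (f y)) y (e i)) x (e i) =
      φ'' (f x) * fderiv ℝ f x (e i) ^ 2 +
        φ' (f x) * fderiv ℝ (fun y => fderiv ℝ f y (e i)) x (e i) := by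
    intro i
    have hchain : (fun y => fderiv ℝ (fun y => φ (f y)) y (e i)) =ᶠ[𝓝 x]
        fun y => φ' (f y) * fderiv ℝ f y (e i) := hdiff.mono fun y hy => by
      have hφf : HasFDerivAt (fun y => φ (f y)) (φ' (f y) • fderiv ℝ f y) y :=
        (hφ (f y)).comp_hasFDerivAt y hy.hasFDerivAt
      simp [hφf.fderiv]
    have hprod : HasFDerivAt (fun y => φ' (f y) * fderiv ℝ f y (e i)) _ x :=
      (hφ'.comp_hasFDerivAt x hdiff.self_of_nhds.hasFDerivAt).mul (hDf.clm_apply (differentiableAt_const (e i))).hasFDerivAt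
    rw [hchain.fderiv_eq, hprod.fderiv]
    simp only [Function.comp_apply, add_apply, smul_apply, smul_eq_mul]
    ring
  unfold lapl
  rw [Finset.sum_congr rfl fun i _ => hpartial i, Finset.sum_add_distrib, ← Finset.mul_sum,
    ← Finset.mul_sum, sum_sq_apply_single_eq_norm_sq]
  ring

theorem stmt3_general (N : ℕ) (O : Set (EuclideanSpace ℝ (Fin N)))
    (hO : IsOpen O) (γ M β : ℝ) (hγ : 0 < γ) (hM : 0 < M) (hβ : 0 < β)
    (d : EuclideanSpace ℝ (Fin N) → ℝ) (hd : ContDiffOn ℝ 2 d O)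
    (hgrad : ∀ x ∈ O, ‖gradient d x‖ = 1)
    (hlapd2 : ∀ x ∈ O, |lapl (fun y => d y ^ 2) x| ≤ M)
    (hdγ : ∀ x ∈ O, γ ≤ d x) :
    ∀ x ∈ O,
      0 ≤ lapl (fun y => β * (Real.exp (-M * (d y ^ 2 - 4 * γ ^ 2) / (4 * γ ^ 2)) - 1)) x := by
  intro x hx
  set c := M / (4 * γ ^ 2)
  set ℓ : ℝ → ℝ := fun t => -M * (t - 4 * γ ^ 2) / (4 * γ ^ 2)
  have hℓ : ∀ t, HasDerivAt ℓ (-c) t := fun t =>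
    ((((hasDerivAt_id t).sub_const _).const_mul (-M)).div_const _).congr_deriv
      (by simp only [c]; ring)
  have hφ : ∀ t, HasDerivAt (fun t => β * (Real.exp (ℓ t) - 1)) (β * -c * Real.exp (ℓ t)) t :=
    fun t => ((((Real.hasDerivAt_exp _).comp t (hℓ t)).sub_const 1).const_mul β).congr_deriv
      (by ring)
  have hφ' : ∀ t, HasDerivAt (fun t => β * -c * Real.exp (ℓ t)) (β * c ^ 2 * Real.exp (ℓ t)) t :=
    fun t => (((Real.hasDerivAt_exp _).comp t (hℓ t)).const_mul (β * -c)).congr_deriv (by ring)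
  have hdx : ContDiffAt ℝ 2 d x := hd.contDiffAt (hO.mem_nhds hx)
  have hgrad_sq : ‖fderiv ℝ (fun y => d y ^ 2) x‖ ^ 2 = 4 * d x ^ 2 := by
    rw [((hdx.differentiableAt (by norm_num)).hasFDerivAt.pow 2).fderiv, norm_smul,
      norm_fderiv_eq_norm_gradient, hgrad x hx]
    norm_num [mul_pow]
  rw [lapl_comp (φ'' := fun t => β * c ^ 2 * Real.exp (ℓ t)) (hdx.pow 2) hφ (hφ' (d x ^ 2)),
    hgrad_sq]
  have hMc : M ≤ 4 * d x ^ 2 * c := calc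
    M = 4 * γ ^ 2 * c := by simp only [c]; field_simp
    _ ≤ 4 * d x ^ 2 * c := by gcongr; exact hdγ x hx
  have hlap := (abs_le.mp (hlapd2 x hx)).2
  calc 0 ≤ β * c * Real.exp (ℓ (d x ^ 2)) * (4 * d x ^ 2 * c - lapl (fun y => d y ^ 2) x) :=
        mul_nonneg (by positivity) (by linarith)
    _ = _ := by ring

theorem stmt3 (N : ℕ) (hN : 1 ≤ N) (O : Set (EuclideanSpace ℝ (Fin N)))
    (hO : IsOpen O) (γ M β : ℝ) (hγ : 0 < γ) (hM : 0 < M) (hβ : 0 < β)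
    (d : EuclideanSpace ℝ (Fin N) → ℝ) (hd : ContDiffOn ℝ 2 d O)
    (hgrad : ∀ x ∈ O, ‖gradient d x‖ = 1)
    (hlapd2 : ∀ x ∈ O, |lapl (fun y => d y ^ 2) x| ≤ M)
    (hdγ : ∀ x ∈ O, γ ≤ d x) :
    ∀ x ∈ O,
      0 ≤ lapl (fun y => β * (Real.exp (-M * (d y ^ 2 - 4 * γ ^ 2) / (4 * γ ^ 2)) - 1)) x :=
  stmt3_general N O hO γ M β hγ hM hβ d hd hgrad hlapd2 hdγ
end

section
/- Let N ≥ 1 and σ > 0. Let C₁ ⊆ ℝ × ℝ^N be nonempty and compact, let L ⊆ ℝ × ℝ^N be nonempty and closed, set ē := e(C₁, L), and assume ē > 0. Let A ⊆ ℝ × ℝ^N and let w : A → ℝ satisfy ē − d^σ_L(p) ≤ w(p) ≤ d^σ_{C₁}(p) for every p ∈ A. Let γ ∈ ℝ and suppose there exists p₀ ∈ A with w(p₀) = γ and d^σ_{C₁}(p₀) + d^σ_L(p₀) = ē. Set Γ := {p ∈ A : w(p) = γ} and Σ := {p ∈ A : w(p) ≤ γ}. Then e(C₁, Γ) = γ and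 e(Σ, L) = ē − γ, so that e(C₁, Γ) + e(Σ, L) = e(C₁, L). Moreover, for every ρ ≥ 0 with ρ < γ < ē − ρ, every p ∈ Γ satisfies d^σ_{C₁}(p) > ρ and d^σ_L(p) > ρ. -/
open Metric Set

/-- The norm `‖(t,x)‖_σ = sqrt(t²/σ² + ‖x‖²)` on `ℝ × ℝ^N`. -/
noncomputable def snormS {N : ℕ} (σ : ℝ) (p : ℝ × EuclideanSpace ℝ (Fin N)) : ℝ :=
  Real.sqrt (p.1 ^ 2 / σ ^ 2 + ‖p.2‖ ^ 2)

/-- The distance function `d^σ_E(p) = inf {‖q - p‖_σ : q ∈ E}`. -/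
noncomputable def distS {N : ℕ} (σ : ℝ) (E : Set (ℝ × EuclideanSpace ℝ (Fin N)))
    (p : ℝ × EuclideanSpace ℝ (Fin N)) : ℝ :=
  sInf {r | ∃ q ∈ E, r = snormS σ (q - p)}

/-- The minimal distance `e(A,B) = inf {‖p - q‖_σ : p ∈ A, q ∈ B}`. -/
noncomputable def eS {N : ℕ} (σ : ℝ) (A B : Set (ℝ × EuclideanSpace ℝ (Fin N))) : ℝ :=
  sInf {r | ∃ p ∈ A, ∃ q ∈ B, r = snormS σ (p - q)}

/-!
On `Γ` the constraint `w ≤ d_{C₁}` gives `d_{C₁} ≥ γ`, and on `Σ` the constraint `ē - d_L ≤ w`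
gives `d_L ≥ ē - γ`. The point `p₀` lies in both sets and, since `d_{C₁}(p₀) + d_L(p₀) = ē`, it
attains both bounds. Hence `p₀` minimises `d_{C₁}` on `Γ` and `d_L` on `Σ`, and each minimal
distance is the value of the distance function at that minimiser.
-/

section

variable {N : ℕ} (σ : ℝ)

lemma snormS_nonneg (p : ℝ × EuclideanSpace ℝ (Fin N)) : 0 ≤ snormS σ p :=
  Real.sqrt_nonneg _

lemma snormS_neg (p : ℝ × EuclideanSpace ℝ (Fin N)) : snormS σ (-p) = snormS σ p := by
  simp [snormS]

lemma distS_le_snormS {E : Set (ℝ × EuclideanSpace ℝ (Fin N))}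
    {p q : ℝ × EuclideanSpace ℝ (Fin N)} (hq : q ∈ E) :
    distS σ E p ≤ snormS σ (q - p) :=
  csInf_le ⟨0, fun _ ⟨_, _, hr⟩ => hr ▸ snormS_nonneg σ _⟩ ⟨q, hq, rfl⟩

lemma eS_comm (A B : Set (ℝ × EuclideanSpace ℝ (Fin N))) : eS σ A B = eS σ B A := by
  unfold eS
  congr 1
  ext r
  constructor <;> rintro ⟨p, hp, q, hq, rfl⟩ <;>
    exact ⟨q, hq, p, hp, by rw [← snormS_neg, neg_sub]⟩

lemma eS_le_distS {A B : Set (ℝ × EuclideanSpace ℝ (Fin N))} (hA : A.Nonempty)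
    {p : ℝ × EuclideanSpace ℝ (Fin N)} (hp : p ∈ B) :
    eS σ A B ≤ distS σ A p := by
  obtain ⟨a, ha⟩ := hA
  refine csInf_le_csInf ⟨0, fun _ ⟨_, _, _, _, hr⟩ => hr ▸ snormS_nonneg σ _⟩
    ⟨_, a, ha, rfl⟩ ?_
  rintro r ⟨q, hq, rfl⟩
  exact ⟨q, hq, p, hp, rfl⟩

lemma le_eS_of_forall_le_distS {A B : Set (ℝ × EuclideanSpace ℝ (Fin N))} (hA : A.Nonempty)
    (hB : B.Nonempty) {r : ℝ} (h : ∀ q ∈ B, r ≤ distS σ A q) :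
    r ≤ eS σ A B := by
  obtain ⟨a, ha⟩ := hA
  obtain ⟨b, hb⟩ := hB
  refine le_csInf ⟨_, a, ha, b, hb, rfl⟩ ?_
  rintro _ ⟨p, hp, q, hq, rfl⟩
  exact (h q hq).trans (distS_le_snormS σ hp)

lemma eS_eq_distS_of_isMinOn {A B : Set (ℝ × EuclideanSpace ℝ (Fin N))} (hA : A.Nonempty)
    {p₀ : ℝ × EuclideanSpace ℝ (Fin N)} (hp₀ : p₀ ∈ B) (hmin : IsMinOn (distS σ A) B p₀) :
    eS σ A B = distS σ A p₀ :=
  le_antisymm (eS_le_distS σ hA hp₀)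
    (le_eS_of_forall_le_distS σ hA ⟨p₀, hp₀⟩ fun _ hq => isMinOn_iff.mp hmin _ hq)

end

theorem stmt5_general (N : ℕ) (σ : ℝ)
    (C₁ L : Set (ℝ × EuclideanSpace ℝ (Fin N)))
    (hC₁ne : C₁.Nonempty) (hLne : L.Nonempty)
    (ebar : ℝ) (hebar : ebar = eS σ C₁ L)
    (A : Set (ℝ × EuclideanSpace ℝ (Fin N))) (w : (ℝ × EuclideanSpace ℝ (Fin N)) → ℝ)
    (hw : ∀ p ∈ A, ebar - distS σ L p ≤ w p ∧ w p ≤ distS σ C₁ p)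
    (γ : ℝ) (p₀ : ℝ × EuclideanSpace ℝ (Fin N)) (hp₀A : p₀ ∈ A) (hp₀w : w p₀ = γ)
    (hp₀e : distS σ C₁ p₀ + distS σ L p₀ = ebar) :
    eS σ C₁ {p ∈ A | w p = γ} = γ ∧
    eS σ {p ∈ A | w p ≤ γ} L = ebar - γ ∧
    eS σ C₁ {p ∈ A | w p = γ} + eS σ {p ∈ A | w p ≤ γ} L = eS σ C₁ L ∧
    ∀ ρ : ℝ, 0 ≤ ρ → ρ < γ → γ < ebar - ρ →
      ∀ p ∈ A, w p = γ → ρ < distS σ C₁ p ∧ ρ < distS σ L p := by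
  have hC₁p₀ : distS σ C₁ p₀ = γ := by linarith [hw p₀ hp₀A]
  have hLp₀ : distS σ L p₀ = ebar - γ := by linarith
  have hp₀Γ : p₀ ∈ {p ∈ A | w p = γ} := ⟨hp₀A, hp₀w⟩
  have hp₀Sigma : p₀ ∈ {p ∈ A | w p ≤ γ} := ⟨hp₀A, hp₀w.le⟩
  have hΓ : eS σ C₁ {p ∈ A | w p = γ} = γ := by
    rw [eS_eq_distS_of_isMinOn σ hC₁ne hp₀Γ, hC₁p₀]
    rintro q ⟨hqA, hqw⟩
    show distS σ C₁ p₀ ≤ distS σ C₁ q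
    linarith [(hw q hqA).2]
  have hSigma : eS σ {p ∈ A | w p ≤ γ} L = ebar - γ := by
    rw [eS_comm, eS_eq_distS_of_isMinOn σ hLne hp₀Sigma, hLp₀]
    rintro q ⟨hqA, hqw⟩
    show distS σ L p₀ ≤ distS σ L q
    linarith [(hw q hqA).1]
  refine ⟨hΓ, hSigma, by rw [hΓ, hSigma, ← hebar]; ring, ?_⟩
  intro ρ _ hργ hγρ p hpA hpw
  obtain ⟨hL, hC₁⟩ := hw p hpA
  exact ⟨by linarith, by linarith⟩

theorem stmt5 (N : ℕ) (hN : 1 ≤ N) (σ : ℝ) (hσ : 0 < σ)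
    (C₁ L : Set (ℝ × EuclideanSpace ℝ (Fin N)))
    (hC₁ne : C₁.Nonempty) (hC₁cp : IsCompact C₁) (hLne : L.Nonempty) (hLcl : IsClosed L)
    (ebar : ℝ) (hebar : ebar = eS σ C₁ L) (hepos : 0 < ebar)
    (A : Set (ℝ × EuclideanSpace ℝ (Fin N))) (w : (ℝ × EuclideanSpace ℝ (Fin N)) → ℝ)
    (hw : ∀ p ∈ A, ebar - distS σ L p ≤ w p ∧ w p ≤ distS σ C₁ p)
    (γ : ℝ) (p₀ : ℝ × EuclideanSpace ℝ (Fin N)) (hp₀A : p₀ ∈ A) (hp₀w : w p₀ = γ)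
    (hp₀e : distS σ C₁ p₀ + distS σ L p₀ = ebar) :
    eS σ C₁ {p ∈ A | w p = γ} = γ ∧
    eS σ {p ∈ A | w p ≤ γ} L = ebar - γ ∧
    eS σ C₁ {p ∈ A | w p = γ} + eS σ {p ∈ A | w p ≤ γ} L = eS σ C₁ L ∧
    ∀ ρ : ℝ, 0 ≤ ρ → ρ < γ → γ < ebar - ρ →
      ∀ p ∈ A, w p = γ → ρ < distS σ C₁ p ∧ ρ < distS σ L p :=
  stmt5_general N σ C₁ L hC₁ne hLne ebar hebar A w hw γ p₀ hp₀A hp₀w hp₀e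
end

section
/- Let k ≥ 1 and let K ⊆ ℝ^k be nonempty. Let a ∈ ℝ^k ∖ K and suppose the distance function d_K := dist(·, K) admits a second-order Taylor expansion at a with data (p, X): there are p ∈ ℝ^k and a symmetric k×k matrix X such that d_K(z) = d_K(a) + ⟨p, z − a⟩ + ½⟨X(z − a), z − a⟩ + o(‖z − a‖²) as z → a. Let b ∈ K satisfy ‖a − b‖ = d_K(a). Then for every α > 0 the function φ(z) := ⟨p, z − b⟩ + ½⟨(X − α I)(z − b), z − b⟩ has a strict local maximum on K at b: there exists ε > 0 such that φ(z) < φ(b) = 0 for every z ∈ K with 0 < ‖z − b‖ < ε. -/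
/-!
Shift a competitor `z ∈ K` by `a - b`: the point `a + (z - b)` lies at distance
`‖a - b‖ = d_K(a)` from `z`, so `d_K(a + (z - b)) ≤ d_K(a)`. The Taylor expansion at `a` in the
direction `z - b` then bounds `⟨p, z - b⟩ + ½⟨X(z - b), z - b⟩` by `(α / 4)‖z - b‖²` near `b`, which is
strictly smaller than the penalty `(α / 2)‖z - b‖²`.
-/

open Metric Asymptotics Topology

theorem exists_forall_norm_lt_model_le_of_isLittleO_sq {E : Type*} [SeminormedAddCommGroup E]
    {f m : E → ℝ} {a : E} (h : (fun z => f z - f a - m (z - a)) =o[𝓝 a] fun z => ‖z - a‖ ^ 2)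
    {c : ℝ} (hc : 0 < c) :
    ∃ δ > 0, ∀ v, ‖v‖ < δ → m v ≤ f (a + v) - f a + c * ‖v‖ ^ 2 := by
  obtain ⟨δ, hδ, hbound⟩ := Metric.eventually_nhds_iff.mp (h.def hc)
  refine ⟨δ, hδ, fun v hv => ?_⟩
  have hv' : dist (a + v) a < δ := by rwa [dist_eq_norm, add_sub_cancel_left]
  have hrem := hbound hv'
  simp only [add_sub_cancel_left, Real.norm_eq_abs, abs_pow, abs_norm] at hrem
  linarith [(abs_le.mp hrem).1]

theorem infDist_add_sub_le_norm {E : Type*} [SeminormedAddCommGroup E] {K : Set E} {z : E}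
    (hz : z ∈ K) (a b : E) : infDist (a + (z - b)) K ≤ ‖a - b‖ := by
  calc infDist (a + (z - b)) K ≤ dist (a + (z - b)) z := infDist_le_dist_of_mem hz
    _ = ‖a - b‖ := by rw [dist_eq_norm]; congr 1; abel

theorem stmt7_general (k : ℕ)
    (K : Set (EuclideanSpace ℝ (Fin k)))
    (a : EuclideanSpace ℝ (Fin k))
    (p : EuclideanSpace ℝ (Fin k))
    (X : EuclideanSpace ℝ (Fin k) →L[ℝ] EuclideanSpace ℝ (Fin k))
    (hTaylor :
      (fun z => Metric.infDist z K - Metric.infDist a K - (inner ℝ p (z - a) : ℝ)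
          - (1 / 2) * (inner ℝ (X (z - a)) (z - a) : ℝ))
        =o[nhds a] (fun z => ‖z - a‖ ^ 2))
    (b : EuclideanSpace ℝ (Fin k)) (hb : ‖a - b‖ = Metric.infDist a K) :
    ∀ α : ℝ, 0 < α → ∃ ε > 0, ∀ z ∈ K, z ≠ b → ‖z - b‖ < ε →
      (inner ℝ p (z - b) : ℝ)
        + (1 / 2) * ((inner ℝ (X (z - b)) (z - b) : ℝ) - α * ‖z - b‖ ^ 2) < 0 := by
  intro α hα
  have hmodel : (fun z => infDist z K - infDist a K
      - ((inner ℝ p (z - a) : ℝ) + (1 / 2) * (inner ℝ (X (z - a)) (z - a) : ℝ)))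
        =o[𝓝 a] fun z => ‖z - a‖ ^ 2 :=
    hTaylor.congr_left fun z => by ring
  obtain ⟨δ, hδ, hle⟩ := exists_forall_norm_lt_model_le_of_isLittleO_sq (f := (infDist · K))
    (m := fun v => (inner ℝ p v : ℝ) + (1 / 2) * (inner ℝ (X v) v : ℝ)) hmodel
    (show 0 < α / 4 by positivity)
  refine ⟨δ, hδ, fun z hz hzb hzδ => ?_⟩
  have hpos : 0 < ‖z - b‖ ^ 2 := pow_pos (norm_pos_iff.mpr (sub_ne_zero.mpr hzb)) 2
  have hK := (infDist_add_sub_le_norm hz a b).trans_eq hb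
  linarith [hle (z - b) hzδ, mul_pos hα hpos]

theorem stmt7 (k : ℕ) (hk : 1 ≤ k)
    (K : Set (EuclideanSpace ℝ (Fin k))) (hKne : K.Nonempty)
    (a : EuclideanSpace ℝ (Fin k)) (ha : a ∉ K)
    (p : EuclideanSpace ℝ (Fin k))
    (X : EuclideanSpace ℝ (Fin k) →L[ℝ] EuclideanSpace ℝ (Fin k))
    (hXsym : ∀ v w, (inner ℝ (X v) w : ℝ) = (inner ℝ v (X w) : ℝ))
    (hTaylor :
      (fun z => Metric.infDist z K - Metric.infDist a K - (inner ℝ p (z - a) : ℝ)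
          - (1 / 2) * (inner ℝ (X (z - a)) (z - a) : ℝ))
        =o[nhds a] (fun z => ‖z - a‖ ^ 2))
    (b : EuclideanSpace ℝ (Fin k)) (hbK : b ∈ K) (hb : ‖a - b‖ = Metric.infDist a K) :
    ∀ α : ℝ, 0 < α → ∃ ε > 0, ∀ z ∈ K, z ≠ b → ‖z - b‖ < ε →
      (inner ℝ p (z - b) : ℝ)
        + (1 / 2) * ((inner ℝ (X (z - b)) (z - b) : ℝ) - α * ‖z - b‖ ^ 2) < 0 :=
  stmt7_general k K a p X hTaylor b hb
end

section
/- Let N ≥ 1 and let A, B ⊆ [0,∞) × ℝ^N be closed sets such that A ∩ ([0,t] × ℝ^N) is compact for every t ≥ 0, B is nonempty, and A(0) ∩ B(0) = ∅. Then there exists τ > 0 such that μ := inf{‖y − x‖ : s, t ∈ [0,τ], x ∈ A(t), y ∈ B(s)} > 0 (where μ := +∞ if the set of such pairs is empty). Moreover, for every ε ∈ (0, μ) and every σ ∈ (0, τ/(2ε)), one has d^σ_B(s, y) ≥ ε for every s ∈ [0, τ/2] and every y ∈ A(s). -/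
open Metric Set

/-- `μ = inf {‖y - x‖ : s, t ∈ [0,τ], x ∈ A(t), y ∈ B(s)}`, with value `+∞` (in `ℝ≥0∞`)
if there are no such pairs. -/
noncomputable def muAB {N : ℕ} (A B : Set (ℝ × EuclideanSpace ℝ (Fin N))) (τ : ℝ) : ENNReal :=
  ⨅ (t ∈ Set.Icc (0 : ℝ) τ) (s ∈ Set.Icc (0 : ℝ) τ)
    (x ∈ {x | (t, x) ∈ A}) (y ∈ {y | (s, y) ∈ B}), edist y x

lemma snormS_ge_norm {N : ℕ} (σ : ℝ) (p : ℝ × EuclideanSpace ℝ (Fin N)) :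
    ‖p.2‖ ≤ snormS σ p := by
  rw [snormS, Real.le_sqrt (norm_nonneg _) (by positivity)]
  have : (0:ℝ) ≤ p.1 ^ 2 / σ ^ 2 := by positivity
  linarith

lemma snormS_ge_abs {N : ℕ} {σ : ℝ} (hσ : 0 < σ) (p : ℝ × EuclideanSpace ℝ (Fin N)) :
    |p.1| / σ ≤ snormS σ p := by
  rw [snormS, Real.le_sqrt (by positivity) (by positivity), div_pow, sq_abs]
  have : (0:ℝ) ≤ ‖p.2‖ ^ 2 := by positivity
  linarith

theorem stmt13 (N : ℕ) (hN : 1 ≤ N)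
    (A B : Set (ℝ × EuclideanSpace ℝ (Fin N)))
    (hAsub : ∀ p ∈ A, 0 ≤ p.1) (hBsub : ∀ p ∈ B, 0 ≤ p.1)
    (hAcl : IsClosed A) (hBcl : IsClosed B)
    (hAtube : ∀ t : ℝ, IsCompact (A ∩ {p | p.1 ≤ t}))
    (hBne : B.Nonempty)
    (hdisj : ∀ x, (0, x) ∈ A → ((0 : ℝ), x) ∉ B) :
    ∃ τ > 0, 0 < muAB A B τ ∧
      ∀ ε : ℝ, 0 < ε → ENNReal.ofReal ε < muAB A B τ →
        ∀ σ : ℝ, 0 < σ → σ < τ / (2 * ε) →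
          ∀ s : ℝ, 0 ≤ s → s ≤ τ / 2 → ∀ y, (s, y) ∈ A → ε ≤ distS σ B (s, y) := by
  have key : ∃ τ > (0:ℝ), 0 < muAB A B τ := by
    by_contra h
    push_neg at h
    have h0 : ∀ n : ℕ, muAB A B (1/(n+1)) = 0 := by
      intro n
      have := h (1/(n+1)) (by positivity)
      simpa using this
    have hex : ∀ n : ℕ, ∃ t ∈ Icc (0:ℝ) (1/(n+1)), ∃ s ∈ Icc (0:ℝ) (1/(n+1)),
        ∃ x, (t, x) ∈ A ∧ ∃ y, (s, y) ∈ B ∧ dist y x < 1/(n+1) := by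
      intro n
      have hlt : muAB A B (1/(n+1)) < ENNReal.ofReal (1/(n+1)) := by
        rw [h0 n]
        exact ENNReal.ofReal_pos.2 (by positivity)
      rw [muAB] at hlt
      simp only [iInf_lt_iff, mem_setOf_eq] at hlt
      obtain ⟨t, ht, s, hs, x, hx, y, hy, hxy⟩ := hlt
      exact ⟨t, ht, s, hs, x, hx, y, hy, edist_lt_ofReal.mp hxy⟩
    choose t ht s hs x hx y hy hd using hex
    have hone : ∀ n : ℕ, (1:ℝ)/(n+1) ≤ 1 := by
      intro n
      rw [div_le_one (by positivity)]
      have : (0:ℝ) ≤ (n:ℝ) := Nat.cast_nonneg n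
      linarith
    have hmem : ∀ n, ((t n, x n) : ℝ × EuclideanSpace ℝ (Fin N)) ∈ A ∩ {p | p.1 ≤ 1} :=
      fun n => ⟨hx n, le_trans (ht n).2 (hone n)⟩
    obtain ⟨q, hqK, φ, hφ, hconv⟩ := (hAtube 1).tendsto_subseq hmem
    have hseq : Filter.Tendsto (fun n : ℕ => (1:ℝ)/(n+1)) Filter.atTop (nhds 0) :=
      tendsto_one_div_add_atTop_nhds_zero_nat
    have htlim : Filter.Tendsto t Filter.atTop (nhds 0) :=
      squeeze_zero (fun n => (ht n).1) (fun n => (ht n).2) hseq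
    have hslim : Filter.Tendsto s Filter.atTop (nhds 0) :=
      squeeze_zero (fun n => (hs n).1) (fun n => (hs n).2) hseq
    have htφ : Filter.Tendsto (fun n => t (φ n)) Filter.atTop (nhds 0) :=
      htlim.comp hφ.tendsto_atTop
    have hq1 : Filter.Tendsto (fun n => t (φ n)) Filter.atTop (nhds q.1) :=
      (continuous_fst.tendsto q).comp hconv
    have hq10 : q.1 = 0 := tendsto_nhds_unique hq1 htφ
    have hxφ : Filter.Tendsto (fun n => x (φ n)) Filter.atTop (nhds q.2) :=
      (continuous_snd.tendsto q).comp hconv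
    have hdφ : Filter.Tendsto (fun n => dist (y (φ n)) (x (φ n))) Filter.atTop (nhds 0) := by
      apply squeeze_zero (fun n => dist_nonneg) (g := fun n : ℕ => (1:ℝ)/(n+1))
      · intro n
        calc dist (y (φ n)) (x (φ n)) ≤ 1/(φ n + 1) := le_of_lt (hd (φ n))
          _ ≤ 1/(n+1) := by
              have h1 : (n:ℝ) + 1 ≤ (φ n : ℝ) + 1 := by
                have := hφ.id_le n
                exact_mod_cast Nat.succ_le_succ this
              exact one_div_le_one_div_of_le (by positivity) h1
      · exact hseq
    have hyφ : Filter.Tendsto (fun n => y (φ n)) Filter.atTop (nhds q.2) := by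
      rw [tendsto_iff_dist_tendsto_zero]
      apply squeeze_zero (fun n => dist_nonneg)
        (fun n => dist_triangle (y (φ n)) (x (φ n)) q.2)
      have := hdφ.add (tendsto_iff_dist_tendsto_zero.mp hxφ)
      simpa using this
    have hprod : Filter.Tendsto (fun n => ((s (φ n), y (φ n)) : ℝ × EuclideanSpace ℝ (Fin N)))
        Filter.atTop (nhds (0, q.2)) :=
      (hslim.comp hφ.tendsto_atTop).prodMk_nhds hyφ
    have hB0 : ((0:ℝ), q.2) ∈ B :=
      hBcl.mem_of_tendsto hprod (Filter.Eventually.of_forall fun n => hy (φ n))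
    have hA0 : ((0:ℝ), q.2) ∈ A := by
      have := hqK.1
      rwa [show q = (q.1, q.2) from rfl, hq10] at this
    exact hdisj q.2 hA0 hB0
  obtain ⟨τ, hτ, hμ⟩ := key
  refine ⟨τ, hτ, hμ, ?_⟩
  intro ε hε hεμ σ hσ hστ s hs0 hsτ y hyA
  rw [distS]
  apply le_csInf
  · obtain ⟨q0, hq0⟩ := hBne
    exact ⟨_, q0, hq0, rfl⟩
  · rintro r ⟨q, hqB, rfl⟩
    by_cases hq1 : q.1 ≤ τ
    · -- time of q within [0, τ] : use μ
      have hle : muAB A B τ ≤ edist q.2 y := by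
        rw [muAB]
        refine le_trans (iInf_le _ s) (le_trans (iInf_le _ ⟨hs0, by linarith⟩) ?_)
        refine le_trans (iInf_le _ q.1) (le_trans (iInf_le _ ⟨hBsub q hqB, hq1⟩) ?_)
        refine le_trans (iInf_le _ y) (le_trans (iInf_le _ hyA) ?_)
        refine le_trans (iInf_le _ q.2) (iInf_le _ ?_)
        simpa using hqB
      have hεd : ε < dist q.2 y := by
        have := lt_of_lt_of_le hεμ hle
        rwa [edist_dist, ENNReal.ofReal_lt_ofReal_iff_of_nonneg hε.le] at this
      calc ε ≤ dist q.2 y := hεd.le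
        _ = ‖(q - (s, y)).2‖ := by rw [dist_eq_norm]; rfl
        _ ≤ snormS σ (q - (s, y)) := snormS_ge_norm σ _
    · -- time of q beyond τ : use the time component
      push_neg at hq1
      have habs : τ / 2 ≤ |(q - (s, y)).1| := by
        have : (q - (s, y)).1 = q.1 - s := rfl
        rw [this, abs_of_nonneg (by linarith)]
        linarith
      have hστ' : ε < (τ / 2) / σ := by
        rw [lt_div_iff₀ hσ]
        have := (lt_div_iff₀ (by positivity : (0:ℝ) < 2 * ε)).mp hστ
        nlinarith
      calc ε ≤ (τ / 2) / σ := hστ'.le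
        _ ≤ |(q - (s, y)).1| / σ := by gcongr
        _ ≤ snormS σ (q - (s, y)) := snormS_ge_abs hσ _
end
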